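/- Let G be a connected finite simple graph on vertex set V with at least one edge and spectral radius ρ (so ρ ≥ 1), and let μ = N(0,1) be the standard Gaussian measure. Fix vertices i and j. Then for almost every ω in the i.i.d. noise field, limsup_{t→∞} (1/t)·M_t^{(i,j)}(ω) ≤ sup_{β ∈ (0,1]} √(2β·(H(β) + β·log ρ)) (the limsup taken over t at least the graph distance from j to i). -/

import Mathlib

open MeasureTheory ProbabilityTheory Filter

/-- A walk-with-self-loops of length `t` from `j` to `i` in the simple graph `G`. -/
def IsWalkWithLoops {V : Type*} (G : SimpleGraph V) (t : ℕ) (j i : V)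
    (p : Fin (t + 1) → V) : Prop :=
  p 0 = j ∧ p (Fin.last t) = i ∧
    ∀ k : Fin t, p k.succ = p k.castSucc ∨ G.Adj (p k.castSucc) (p k.succ)

/-- The spectral radius of a finite simple graph: the `ℓ² → ℓ²` operator norm of its
adjacency matrix. -/
noncomputable def specRad {V : Type*} [Fintype V] [DecidableEq V] (G : SimpleGraph V)
    [DecidableRel G.Adj] : ℝ :=
  ‖LinearMap.toContinuousLinearMap (Matrix.toEuclideanLin (G.adjMatrix ℝ))‖

/-- The binary entropy function `H(β) = −β log β − (1−β) log(1−β)`. -/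
noncomputable def binH (β : ℝ) : ℝ :=
  -(β * Real.log β) - (1 - β) * Real.log (1 - β)

/-- `M_t^{(i,j)}(ω)` for a noise field `ω : ℕ × V × V → ℝ`. -/
noncomputable def pathMaxInf {V : Type*} [Fintype V] [DecidableEq V] (G : SimpleGraph V)
    (t : ℕ) (j i : V) (ω : ℕ × V × V → ℝ) : ℝ :=
  ⨆ p : {p : Fin (t + 1) → V // IsWalkWithLoops G t j i p},
    ∑ k : Fin t, if p.1 k.castSucc = p.1 k.succ then 0
      else ω ((k : ℕ), p.1 k.castSucc, p.1 k.succ)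

/-!
Union bound over walks plus a Chernoff bound. A walk with `s` jumps (non-loop steps) has a
weight that is a sum of `s` independent standard Gaussians, so it exceeds `a t` with probability
at most `exp (-(a t)² / 2s)`. The number of walks with `s` jumps is the coefficient of `x ^ s` in
`((1 + x A) ^ t) j i ≤ (1 + x ρ) ^ t`; taking `x = β / ((1 - β) ρ)` with `β = s / t` bounds it by
`exp (t H(β) + s log ρ)`. Hence for `a` above the supremum `S` the tail `P (M_t ≥ a t)` is at most
`(t + 1) exp (-(a² - S²) t / 2)`, which is summable, and Borel–Cantelli concludes.
-/

open Finset Filter Topology MeasureTheory ProbabilityTheory Real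
open scoped NNReal Matrix.Norms.L2Operator

theorem Matrix.pow_apply_eq_sum_prod {n R : Type*} [Fintype n] [DecidableEq n] [CommSemiring R]
    (M : Matrix n n R) (t : ℕ) (j i : n) :
    (M ^ t) j i = ∑ p : Fin (t + 1) → n with p 0 = j ∧ p (Fin.last t) = i,
      ∏ k : Fin t, M (p k.castSucc) (p k.succ) := by
  induction t generalizing j with
  | zero =>
    rw [sum_filter, ← (Equiv.funUnique (Fin 1) n).symm.sum_comp]
    simp [Matrix.one_apply, ite_and]
  | succ t ih =>
    rw [pow_succ', Matrix.mul_apply, sum_filter, ← (Fin.consEquiv fun _ => n).sum_comp,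
      Fintype.sum_prod_type, sum_comm]
    simp only [ih, mul_sum, sum_filter, sum_comm (γ := n)]
    refine sum_congr rfl fun q _ => ?_
    simp [Fin.prod_univ_succ, ← Fin.succ_last, ite_and]

theorem Matrix.norm_apply_le_l2_opNorm {m n 𝕜 : Type*} [RCLike 𝕜] [Fintype m] [Fintype n]
    [DecidableEq n] (A : Matrix m n 𝕜) (i : m) (j : n) : ‖A i j‖ ≤ ‖A‖ := by
  have h := A.l2_opNorm_mulVec (EuclideanSpace.single j 1)
  rw [PiLp.norm_single, norm_one, mul_one] at h
  refine le_trans (le_of_eq ?_) ((PiLp.norm_apply_le _ i).trans h)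
  simp [Matrix.mulVec_single]

theorem Matrix.apply_pow_one_add_smul_le {n : Type*} [Fintype n] [DecidableEq n]
    (A : Matrix n n ℝ) {x : ℝ} (hx : 0 ≤ x) (t : ℕ) (j i : n) :
    ((1 + x • A) ^ t) j i ≤ (1 + x * ‖A‖) ^ t := by
  have : Nonempty n := ⟨j⟩
  calc ((1 + x • A) ^ t) j i ≤ ‖(1 + x • A) ^ t‖ :=
        (Real.le_norm_self _).trans (Matrix.norm_apply_le_l2_opNorm _ j i)
    _ ≤ ‖1 + x • A‖ ^ t := norm_pow_le _ t
    _ ≤ (1 + x * ‖A‖) ^ t := by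
        gcongr
        refine (norm_add_le _ _).trans ?_
        rw [norm_one, norm_smul, Real.norm_of_nonneg hx]

theorem le_exp_of_forall_mul_pow_le_one_add_mul_pow {N ρ : ℝ} (hρ : 0 < ρ) {s t : ℕ}
    (hs : 0 < s) (hst : s ≤ t) (h : ∀ x : ℝ, 0 < x → N * x ^ s ≤ (1 + x * ρ) ^ t) :
    N ≤ exp (t * binEntropy (s / t) + s * log ρ) := by
  have ht : (0 : ℝ) < t := by exact_mod_cast hs.trans_le hst
  rcases hst.lt_or_eq with hst | rfl
  · set β : ℝ := s / t with hβ_def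
    have hβ : 0 < β := by positivity
    have hβ1 : 0 < 1 - β := by rw [sub_pos, hβ_def, div_lt_one ht]; exact_mod_cast hst
    have hsβ : (s : ℝ) = t * β := by rw [hβ_def, mul_div_cancel₀ _ ht.ne']
    -- `x ↦ (1 + x ρ) ^ t / x ^ s` is minimal at this `x`
    have hx : 0 < β / ((1 - β) * ρ) := by positivity
    refine ((le_div_iff₀ (pow_pos hx s)).2 (h _ hx)).trans_eq ?_
    have h1 : 1 + β / ((1 - β) * ρ) * ρ = exp (-log (1 - β)) := by
      rw [exp_neg, exp_log hβ1]; field_simp; ring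
    rw [h1, ← rpow_natCast, ← rpow_natCast, ← exp_mul, ← exp_log hx, ← exp_mul, ← exp_sub, hsβ,
      log_div hβ.ne' (by positivity), log_mul hβ1.ne' hρ.ne', binEntropy, log_inv, log_inv]
    ring_nf
  · have hlim : Tendsto (fun x : ℝ => (x⁻¹ + ρ) ^ s) atTop (𝓝 (ρ ^ s)) := by
      simpa using (tendsto_inv_atTop_zero.add_const ρ).pow s
    rw [div_self ht.ne', binEntropy_one, mul_zero, zero_add, ← log_pow, exp_log (by positivity)]
    refine ge_of_tendsto hlim ((eventually_gt_atTop 0).mono fun x hx => ?_)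
    have hx' : (x⁻¹ + ρ) ^ s = (1 + x * ρ) ^ s / x ^ s := by
      rw [← div_pow]; congr 1; field_simp
    rw [hx', le_div_iff₀ (by positivity)]
    exact h x hx

section Walks

variable {V : Type*} [DecidableEq V]

def jumps {t : ℕ} (p : Fin (t + 1) → V) : Finset (Fin t) := {k | p k.castSucc ≠ p k.succ}

instance (G : SimpleGraph V) [DecidableRel G.Adj] (t : ℕ) (j i : V) :
    DecidablePred (IsWalkWithLoops G t j i) := fun p => by
  unfold IsWalkWithLoops; infer_instance

variable (G : SimpleGraph V) [DecidableRel G.Adj]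

theorem one_add_smul_adjMatrix_apply {R : Type*} [CommSemiring R] (x : R) (u v : V) :
    (1 + x • G.adjMatrix R) u v = if u = v then 1 else if G.Adj u v then x else 0 := by
  by_cases huv : u = v
  · subst huv; simp
  · simp [huv, Matrix.one_apply_ne huv]

theorem prod_one_add_smul_adjMatrix_apply {R : Type*} [CommSemiring R] (x : R) {t : ℕ}
    (p : Fin (t + 1) → V) :
    ∏ k : Fin t, (1 + x • G.adjMatrix R) (p k.castSucc) (p k.succ) =
      if ∀ k : Fin t, p k.succ = p k.castSucc ∨ G.Adj (p k.castSucc) (p k.succ)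
      then x ^ #(jumps p) else 0 := by
  simp only [one_add_smul_adjMatrix_apply]
  split_ifs with hp
  · rw [jumps, prod_ite, prod_const_one, one_mul, ← prod_const]
    refine prod_congr rfl fun k hk => ?_
    rw [if_pos ((hp k).resolve_left (Ne.symm (mem_filter.1 hk).2))]
  · push Not at hp
    obtain ⟨k, hne, hnadj⟩ := hp
    exact prod_eq_zero (mem_univ k) (by simp [Ne.symm hne, hnadj])

variable [Fintype V]

def walksWithLoops (t : ℕ) (j i : V) : Finset (Fin (t + 1) → V) :=
  {p | IsWalkWithLoops G t j i p}

variable {G} in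
theorem mem_walksWithLoops {t : ℕ} {j i : V} {p : Fin (t + 1) → V} :
    p ∈ walksWithLoops G t j i ↔ IsWalkWithLoops G t j i p := by
  simp [walksWithLoops]

theorem sum_pow_card_jumps {R : Type*} [CommSemiring R] (x : R) (t : ℕ) (j i : V) :
    ∑ p ∈ walksWithLoops G t j i, x ^ #(jumps p) = ((1 + x • G.adjMatrix R) ^ t) j i := by
  simp only [Matrix.pow_apply_eq_sum_prod, prod_one_add_smul_adjMatrix_apply, ← sum_filter,
    filter_filter, walksWithLoops, IsWalkWithLoops, and_assoc]

theorem specRad_eq_l2_opNorm : specRad G = ‖G.adjMatrix ℝ‖ := rfl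

theorem one_le_specRad (hE : G.edgeSet.Nonempty) : 1 ≤ specRad G := by
  obtain ⟨e, he⟩ := hE
  induction e using Sym2.ind with
  | _ u v =>
    simpa [specRad_eq_l2_opNorm, (G.mem_edgeSet).1 he] using
      Matrix.norm_apply_le_l2_opNorm (G.adjMatrix ℝ) u v

theorem card_walksWithLoops_mul_pow_le {t : ℕ} (j i : V) (s : ℕ) {x : ℝ} (hx : 0 ≤ x) :
    (#{p ∈ walksWithLoops G t j i | #(jumps p) = s} : ℝ) * x ^ s ≤ (1 + x * specRad G) ^ t := by
  calc (#{p ∈ walksWithLoops G t j i | #(jumps p) = s} : ℝ) * x ^ s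
      = ∑ p ∈ walksWithLoops G t j i with #(jumps p) = s, x ^ #(jumps p) := by
        rw [sum_congr rfl fun p hp => by rw [(mem_filter.1 hp).2], sum_const, nsmul_eq_mul]
    _ ≤ ∑ p ∈ walksWithLoops G t j i, x ^ #(jumps p) :=
        sum_le_sum_of_subset_of_nonneg (filter_subset _ _) fun _ _ _ => by positivity
    _ ≤ (1 + x * specRad G) ^ t := by
        rw [sum_pow_card_jumps]
        exact Matrix.apply_pow_one_add_smul_le _ hx t j i

theorem card_walksWithLoops_le (hρ : 0 < specRad G) {s t : ℕ} (hs : 0 < s) (hst : s ≤ t)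
    (j i : V) :
    (#{p ∈ walksWithLoops G t j i | #(jumps p) = s} : ℝ) ≤
      exp (t * binEntropy (s / t) + s * log (specRad G)) :=
  le_exp_of_forall_mul_pow_le_one_add_mul_pow hρ hs hst fun _ hx =>
    card_walksWithLoops_mul_pow_le G j i s hx.le

end Walks

theorem hasSubgaussianMGF_id_gaussianReal (v : ℝ≥0) :
    HasSubgaussianMGF id v (gaussianReal 0 v) where
  integrable_exp_mul t := integrable_exp_mul_gaussianReal t
  mgf_le t := by simp [mgf_id_gaussianReal]

section Weights

variable {V : Type*} [DecidableEq V]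

-- `pathMaxInf G t j i ω` is by definition `⨆ p, walkWeight p ω` over the walks-with-loops `p`.
def walkWeight {t : ℕ} (p : Fin (t + 1) → V) (ω : ℕ × V × V → ℝ) : ℝ :=
  ∑ k : Fin t, if p k.castSucc = p k.succ then 0 else ω ((k : ℕ), p k.castSucc, p k.succ)

theorem walkWeight_eq_sum_jumps {t : ℕ} (p : Fin (t + 1) → V) (ω : ℕ × V × V → ℝ) :
    walkWeight p ω = ∑ k ∈ jumps p, ω ((k : ℕ), p k.castSucc, p k.succ) := by
  simp only [walkWeight, jumps, sum_filter, ite_not]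

theorem walkWeight_eq_zero {t : ℕ} {p : Fin (t + 1) → V} (hp : #(jumps p) = 0)
    (ω : ℕ × V × V → ℝ) : walkWeight p ω = 0 := by
  rw [walkWeight_eq_sum_jumps, card_eq_zero.1 hp, sum_empty]

theorem measureReal_le_walkWeight_le {P : Measure (ℕ × V × V → ℝ)} {v : ℝ≥0}
    (hindep : iIndepFun (fun c (ω : ℕ × V × V → ℝ) => ω c) P)
    (hsub : ∀ c, HasSubgaussianMGF (fun ω : ℕ × V × V → ℝ => ω c) v P)
    {t : ℕ} (p : Fin (t + 1) → V) {r : ℝ} (hr : 0 ≤ r) :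
    P.real {ω | r ≤ walkWeight p ω} ≤ exp (-r ^ 2 / (2 * (#(jumps p) * v))) := by
  let e : Fin t ↪ ℕ × V × V :=
    ⟨fun k => ((k : ℕ), p k.castSucc, p k.succ), fun k l h => Fin.ext (congrArg Prod.fst h)⟩
  have hweight : ∀ ω, walkWeight p ω = ∑ c ∈ (jumps p).map e, ω c := fun ω => by
    rw [walkWeight_eq_sum_jumps, sum_map]; rfl
  simpa [hweight] using HasSubgaussianMGF.measure_sum_ge_le_of_iIndepFun hindep
    (fun c _ => hsub c) hr (s := (jumps p).map e)

variable [Fintype V] {G : SimpleGraph V} [DecidableRel G.Adj]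

theorem exists_le_walkWeight_of_le_pathMaxInf {t : ℕ} {j i : V} {ω : ℕ × V × V → ℝ} {r : ℝ}
    (hr : 0 < r) (h : r ≤ pathMaxInf G t j i ω) :
    ∃ p ∈ walksWithLoops G t j i, r ≤ walkWeight p ω := by
  rcases isEmpty_or_nonempty {p // IsWalkWithLoops G t j i p} with hwalks | hwalks
  · rw [pathMaxInf, Real.iSup_of_isEmpty] at h
    exact absurd h hr.not_ge
  · obtain ⟨p, hp⟩ := exists_eq_ciSup_of_finite
      (f := fun p : {p // IsWalkWithLoops G t j i p} => walkWeight p.1 ω)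
    exact ⟨p, mem_walksWithLoops.2 p.2, h.trans_eq hp.symm⟩

theorem measureReal_le_pathMaxInf_le (P : Measure (ℕ × V × V → ℝ)) [IsFiniteMeasure P]
    {v : ℝ≥0} (hindep : iIndepFun (fun c (ω : ℕ × V × V → ℝ) => ω c) P)
    (hsub : ∀ c, HasSubgaussianMGF (fun ω : ℕ × V × V → ℝ => ω c) v P)
    (t : ℕ) (j i : V) {r : ℝ} (hr : 0 < r) :
    P.real {ω | r ≤ pathMaxInf G t j i ω} ≤
      ∑ s ∈ Ioc 0 t, #{p ∈ walksWithLoops G t j i | #(jumps p) = s} *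
        exp (-r ^ 2 / (2 * (s * v))) := by
  have hjumps : ∀ p ∈ walksWithLoops G t j i, #(jumps p) ∈ Icc 0 t := fun p _ =>
    mem_Icc.2 ⟨Nat.zero_le _, (card_le_univ _).trans_eq (Fintype.card_fin t)⟩
  have hnull : ∀ p : Fin (t + 1) → V, #(jumps p) = 0 → P.real {ω | r ≤ walkWeight p ω} = 0 :=
    fun p hp => by simp [walkWeight_eq_zero hp, hr.not_ge]
  calc P.real {ω | r ≤ pathMaxInf G t j i ω}
      ≤ P.real (⋃ p ∈ walksWithLoops G t j i, {ω | r ≤ walkWeight p ω}) :=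
        measureReal_mono (fun ω hω => by
          simpa using exists_le_walkWeight_of_le_pathMaxInf hr hω) (measure_ne_top _ _)
    _ ≤ ∑ p ∈ walksWithLoops G t j i, P.real {ω | r ≤ walkWeight p ω} :=
        measureReal_biUnion_finset_le _ _
    _ = ∑ s ∈ Icc 0 t, ∑ p ∈ walksWithLoops G t j i with #(jumps p) = s,
          P.real {ω | r ≤ walkWeight p ω} := (sum_fiberwise_of_maps_to hjumps _).symm
    _ = ∑ s ∈ Ioc 0 t, ∑ p ∈ walksWithLoops G t j i with #(jumps p) = s,
          P.real {ω | r ≤ walkWeight p ω} := by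
        rw [Icc_eq_cons_Ioc (Nat.zero_le t), sum_cons,
          sum_eq_zero fun p hp => hnull p (mem_filter.1 hp).2, zero_add]
    _ ≤ _ := by
        refine sum_le_sum fun s _ => ?_
        rw [← nsmul_eq_mul]
        refine sum_le_card_nsmul _ _ _ fun p hp => ?_
        rw [← (mem_filter.1 hp).2]
        exact measureReal_le_walkWeight_le hindep hsub p hr.le

theorem mul_sub_sq_div_le_of_two_mul_div_mul_le {E K a t s : ℝ} (hs : 0 < s) (hst : s ≤ t)
    (hE : 2 * (s / t) * E ≤ K) (hKa : K ≤ a ^ 2) :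
    t * E - (a * t) ^ 2 / (2 * s) ≤ -((a ^ 2 - K) / 2 * t) := by
  have ht : 0 < t := hs.trans_le hst
  have h1 : 2 * s * E ≤ t * K := by
    have : 2 * (s / t) * E = 2 * s * E / t := by ring
    rwa [this, div_le_iff₀ ht, mul_comm K] at hE
  rw [sub_le_iff_le_add, ← sub_le_iff_le_add', le_div_iff₀ (by positivity)]
  nlinarith [mul_le_mul_of_nonneg_left hst (mul_nonneg (sub_nonneg.2 hKa) ht.le)]

theorem measureReal_mul_le_pathMaxInf_le (hρ : 0 < specRad G)
    (P : Measure (ℕ × V × V → ℝ)) [IsProbabilityMeasure P]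
    (hindep : iIndepFun (fun c (ω : ℕ × V × V → ℝ) => ω c) P)
    (hsub : ∀ c, HasSubgaussianMGF (fun ω : ℕ × V × V → ℝ => ω c) 1 P)
    {K a : ℝ} (hK : ∀ β ∈ Set.Ioc (0 : ℝ) 1, 2 * β * (binEntropy β + β * log (specRad G)) ≤ K)
    (ha : 0 < a) (hKa : K ≤ a ^ 2) (t : ℕ) (j i : V) :
    P.real {ω | a * t ≤ pathMaxInf G t j i ω} ≤ (t + 1) * exp (-((a ^ 2 - K) / 2 * t)) := by
  rcases t.eq_zero_or_pos with rfl | ht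
  · simp [measureReal_le_one]
  have hterm : ∀ s ∈ Ioc 0 t, #{p ∈ walksWithLoops G t j i | #(jumps p) = s} *
      exp (-(a * t) ^ 2 / (2 * (s * ((1 : ℝ≥0) : ℝ)))) ≤ exp (-((a ^ 2 - K) / 2 * t)) := by
    intro s hs
    obtain ⟨hs, hst⟩ := mem_Ioc.1 hs
    have hst' : (s : ℝ) ≤ t := by exact_mod_cast hst
    have hβ : (s : ℝ) / t ∈ Set.Ioc 0 1 :=
      ⟨by positivity, div_le_one_of_le₀ hst' (Nat.cast_nonneg t)⟩
    have hlin : (t : ℝ) * binEntropy (s / t) + s * log (specRad G) =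
        t * (binEntropy (s / t) + s / t * log (specRad G)) := by
      field_simp
    calc _ ≤ exp (t * binEntropy (s / t) + s * log (specRad G)) *
          exp (-(a * t) ^ 2 / (2 * s)) := by
          rw [NNReal.coe_one, mul_one]
          gcongr
          exact card_walksWithLoops_le G hρ hs hst j i
      _ ≤ _ := by
          rw [← exp_add, hlin, neg_div, ← sub_eq_add_neg]
          exact exp_le_exp.2 (mul_sub_sq_div_le_of_two_mul_div_mul_le (by positivity) hst'
            (hK _ hβ) hKa)
  calc _ ≤ _ := measureReal_le_pathMaxInf_le P hindep hsub t j i (by positivity)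
    _ ≤ ∑ _s ∈ Ioc 0 t, exp (-((a ^ 2 - K) / 2 * t)) := sum_le_sum hterm
    _ ≤ _ := by
        rw [sum_const, Nat.card_Ioc, nsmul_eq_mul, Nat.sub_zero]
        gcongr
        linarith

end Weights

-- `0 ≤ a` is needed because `limsup u = 0` in `ℝ` when `u` is unbounded below.
theorem Real.limsup_le_of_eventually_le {ι : Type*} {l : Filter ι} {u : ι → ℝ} {a : ℝ}
    (ha : 0 ≤ a) (h : ∀ᶠ n in l, u n ≤ a) : limsup u l ≤ a := by
  rw [limsup_eq]
  by_cases hbdd : BddBelow {x | ∀ᶠ n in l, u n ≤ x}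
  · exact csInf_le hbdd h
  · rwa [Real.sInf_of_not_bddBelow hbdd]

theorem ae_limsup_div_le_of_summable {Ω : Type*} [MeasurableSpace Ω] {μ : Measure Ω}
    [IsFiniteMeasure μ] {X : ℕ → Ω → ℝ} {S : ℝ} (hS : 0 ≤ S)
    (h : ∀ a, S < a → Summable fun t : ℕ => μ.real {ω | a * t ≤ X t ω}) :
    ∀ᵐ ω ∂μ, limsup (fun t : ℕ => X t ω / t) atTop ≤ S := by
  have hBC : ∀ a, S < a → ∀ᵐ ω ∂μ, ∀ᶠ t : ℕ in atTop, X t ω / t ≤ a := fun a ha => by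
    have hfin : ∑' t : ℕ, μ {ω | a * t ≤ X t ω} ≠ ⊤ := by
      rw [tsum_congr fun t => (ofReal_measureReal (measure_ne_top μ _)).symm,
        ← ENNReal.ofReal_tsum_of_nonneg (fun _ => measureReal_nonneg) (h a ha)]
      exact ENNReal.ofReal_ne_top
    filter_upwards [ae_eventually_notMem hfin] with ω hω
    filter_upwards [hω, eventually_gt_atTop 0] with t hlt ht
    rw [div_le_iff₀ (by exact_mod_cast ht)]
    exact (not_le.1 hlt).le
  have hall := ae_all_iff.2 fun n : ℕ =>
    hBC (S + 1 / (n + 1)) (lt_add_of_pos_right S Nat.one_div_pos_of_nat)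
  filter_upwards [hall] with ω hω
  refine ge_of_tendsto' (by simpa using tendsto_one_div_add_atTop_nhds_zero_nat.const_add S)
    fun n => Real.limsup_le_of_eventually_le (by positivity) (hω n)

theorem summable_add_one_mul_exp_neg_mul {c : ℝ} (hc : 0 < c) :
    Summable fun t : ℕ => (t + 1) * exp (-(c * t)) := by
  simpa [add_mul] using
    (summable_pow_mul_exp_neg_nat_mul 1 hc).add (summable_pow_mul_exp_neg_nat_mul 0 hc)

theorem le_sq_iSup_sqrt {ι : Type*} {f : ι → ℝ} (hf : ∀ i, 0 ≤ f i)
    (hbdd : BddAbove (Set.range f)) (i : ι) : f i ≤ (⨆ i, √(f i)) ^ 2 := by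
  have hbdd' : BddAbove (Set.range fun i => √(f i)) := by
    obtain ⟨M, hM⟩ := hbdd
    exact ⟨√M, Set.forall_mem_range.2 fun i => Real.sqrt_le_sqrt (hM ⟨i, rfl⟩)⟩
  rw [← Real.sq_sqrt (hf i)]
  gcongr
  exact le_ciSup hbdd' i

section Rate

variable {ρ β : ℝ}

theorem two_mul_binEntropy_add_mul_log_nonneg (hρ : 1 ≤ ρ) (hβ : β ∈ Set.Icc (0 : ℝ) 1) :
    0 ≤ 2 * β * (binEntropy β + β * log ρ) := by
  have := binEntropy_nonneg hβ.1 hβ.2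
  have := log_nonneg hρ
  have := hβ.1
  positivity

theorem two_mul_binEntropy_add_mul_log_le (hρ : 1 ≤ ρ) (hβ : β ∈ Set.Icc (0 : ℝ) 1) :
    2 * β * (binEntropy β + β * log ρ) ≤ 2 * (log 2 + log ρ) := by
  have hL := log_nonneg hρ
  have hH := binEntropy_nonneg hβ.1 hβ.2
  have := binEntropy_le_log_two (p := β)
  nlinarith [mul_nonneg (sub_nonneg.2 hβ.2) hH, mul_nonneg (sub_nonneg.2 hβ.2) hL,
    mul_nonneg (mul_nonneg hβ.1 (sub_nonneg.2 hβ.2)) hL]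

end Rate

theorem binH_eq_binEntropy : binH = binEntropy := by
  ext β
  simp only [binH, binEntropy, log_inv]
  ring

theorem limsup_pathMax_le_gaussian_general {V : Type*} [Fintype V] [DecidableEq V]
    (G : SimpleGraph V) [DecidableRel G.Adj]
    (hE : G.edgeSet.Nonempty)
    (P : Measure (ℕ × V × V → ℝ)) [IsProbabilityMeasure P]
    (hindep : ProbabilityTheory.iIndepFun
      (fun c (ω : ℕ × V × V → ℝ) => ω c) P)
    (hlaw : ∀ c : ℕ × V × V, P.map (fun ω => ω c) = gaussianReal 0 1)
    (i j : V) :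
    ∀ᵐ ω ∂P, Filter.limsup (fun t : ℕ => pathMaxInf G t j i ω / t) Filter.atTop ≤
      ⨆ β : Set.Ioc (0 : ℝ) 1,
        Real.sqrt (2 * β * (binH β + (β : ℝ) * Real.log (specRad G))) := by
  have hρ : 1 ≤ specRad G := one_le_specRad G hE
  have hsub : ∀ c, HasSubgaussianMGF (fun ω : ℕ × V × V → ℝ => ω c) 1 P := fun c =>
    (HasSubgaussianMGF.id_map_iff (measurable_pi_apply c).aemeasurable).1 <| by
      simpa [hlaw c] using hasSubgaussianMGF_id_gaussianReal 1
  set f : Set.Ioc (0 : ℝ) 1 → ℝ := fun β => 2 * β * (binEntropy β + β * log (specRad G))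
  have hf : ∀ β, 0 ≤ f β := fun β =>
    two_mul_binEntropy_add_mul_log_nonneg hρ (Set.Ioc_subset_Icc_self β.2)
  have hbdd : BddAbove (Set.range f) := ⟨2 * (log 2 + log (specRad G)),
    Set.forall_mem_range.2 fun β =>
      two_mul_binEntropy_add_mul_log_le hρ (Set.Ioc_subset_Icc_self β.2)⟩
  rw [binH_eq_binEntropy]
  set S := ⨆ β : Set.Ioc (0 : ℝ) 1, √(f β)
  have hS : 0 ≤ S := Real.iSup_nonneg fun _ => sqrt_nonneg _
  refine ae_limsup_div_le_of_summable hS fun a ha => ?_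
  refine (summable_add_one_mul_exp_neg_mul (c := (a ^ 2 - S ^ 2) / 2) (by nlinarith))
    |>.of_nonneg_of_le (fun _ => measureReal_nonneg) fun t =>
      measureReal_mul_le_pathMaxInf_le (by linarith) P hindep hsub
        (fun β hβ => le_sq_iSup_sqrt hf hbdd ⟨β, hβ⟩) (by linarith) (by nlinarith) t j i

/-- for a connected graph with at least one edge and i.i.d. standard Gaussian
noise, almost surely `limsup_{t → ∞} M_t^{(i,j)} / t ≤ sup_{β ∈ (0,1]} √(2β (H(β) + β log ρ))`. -/
theorem limsup_pathMax_le_gaussian {V : Type*} [Fintype V] [DecidableEq V]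
    (G : SimpleGraph V) [DecidableRel G.Adj] (hG : G.Connected)
    (hE : G.edgeSet.Nonempty)
    (P : Measure (ℕ × V × V → ℝ)) [IsProbabilityMeasure P]
    (hindep : ProbabilityTheory.iIndepFun
      (fun c (ω : ℕ × V × V → ℝ) => ω c) P)
    (hlaw : ∀ c : ℕ × V × V, P.map (fun ω => ω c) = gaussianReal 0 1)
    (i j : V) :
    ∀ᵐ ω ∂P, Filter.limsup (fun t : ℕ => pathMaxInf G t j i ω / t) Filter.atTop ≤
      ⨆ β : Set.Ioc (0 : ℝ) 1,
        Real.sqrt (2 * β * (binH β + (β : ℝ) * Real.log (specRad G))) :=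
  limsup_pathMax_le_gaussian_general G hE P hindep hlaw i j
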